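/- arXiv:2404.16143 — 2 statements merged into one kernel-verified Lean document; each statement's English description precedes it below -/
import Mathlib

section
/- Refinement of byte reads from infinite to finite memory: if σ^inf ≳ σ^fin, p^inf = ↑p^fin, and read_b p^inf σ^inf ∋ ok(σ^inf, b^inf), then there exists a finite symbolic byte b^fin such that b^inf = ↑b^fin and read_b p^fin σ^fin ∋ ok(σ^fin, b^fin). -/
/-! Two-phase memory model: refinement of byte reads from infinite to finite memory. -/

/-- Pointers: an address tagged with a provenance (`Option ℕ`, `none` is the wildcard). -/
structure MPtr (Addr : Type) where
  a : Addr
  pr : Option ℕ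

/-- Memory configurations. -/
structure Conf (Addr SByte : Type) where
  mem : Addr → Option (SByte × Option ℕ)
  heap : Addr → Option (Set (MPtr Addr))
  stack : List (Set (MPtr Addr))
  used : Set (Option ℕ)

/-- Possible outcomes of a memory operation. -/
inductive ErrUbOom (A : Type) where
  | UB
  | OOM
  | FAIL
  | ok (a : A)

/-- The specification monad. -/
abbrev MemPropT (Addr SByte X : Type) : Type :=
  Conf Addr SByte → Set (ErrUbOom (Conf Addr SByte × X))

/-- `σ.mem[p] ≐ b`: address `p.a` maps to byte `b` with provenance `p.pr`. -/
def readByteAt {Addr SByte : Type} (σ : Conf Addr SByte) (p : MPtr Addr) (b : SByte) : Prop :=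
  σ.mem p.a = some (b, p.pr)

/-- A pointer is accessible in memory. -/
def accessible {Addr SByte : Type} (σ : Conf Addr SByte) (p : MPtr Addr) : Prop :=
  ∃ b, readByteAt σ p b

/-- Specification of reading a byte: `ok (σ, b)` on a successful provenance-checked lookup
(leaving the configuration unchanged), `UB` when the pointer is not accessible
(and `OOM` is always allowed). -/
def readSpec {Addr SByte : Type} (p : MPtr Addr) : MemPropT Addr SByte SByte :=
  fun σ =>
    { beh | beh = .OOM
          ∨ (¬ accessible σ p ∧ beh = .UB)
          ∨ ∃ b, readByteAt σ p b ∧ beh = .ok (σ, b) }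

/-- Canonical injection of finite (64-bit) addresses into the infinite address type ℤ. -/
def liftAddr (a : UInt64) : ℤ := (a.toNat : ℤ)

/-- Lifting of pointers. -/
def liftPtr (p : MPtr UInt64) : MPtr ℤ := ⟨liftAddr p.a, p.pr⟩

/-- Pointwise lifting of a finite memory configuration to an infinite one,
given a lifting `liftB` of symbolic bytes. -/
def liftConf {SBf SBi : Type} (liftB : SBf → SBi) (σ : Conf UInt64 SBf) : Conf ℤ SBi where
  mem := fun z =>
    if 0 ≤ z ∧ z < 2 ^ 64 then
      (σ.mem (UInt64.ofNat z.toNat)).map (fun bp => (liftB bp.1, bp.2))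
    else none
  heap := fun z =>
    if 0 ≤ z ∧ z < 2 ^ 64 then
      (σ.heap (UInt64.ofNat z.toNat)).map (fun S => liftPtr '' S)
    else none
  stack := σ.stack.map (fun f => liftPtr '' f)
  used := σ.used

theorem ofNat_toNat64 (a : UInt64) : UInt64.ofNat a.toNat = a := by
  apply UInt64.ext
  show a.toNat % UInt64.size = a.toNat
  exact Nat.mod_eq_of_lt (UInt64.toNat_lt a)

theorem liftConf_mem {SBf SBi : Type} (liftB : SBf → SBi) (σ : Conf UInt64 SBf) (a : UInt64) :
    (liftConf liftB σ).mem (liftAddr a) = (σ.mem a).map (fun bp => (liftB bp.1, bp.2)) := by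
  have hfun : (liftConf liftB σ).mem = fun z =>
      if 0 ≤ z ∧ z < 2 ^ 64 then
        (σ.mem (UInt64.ofNat z.toNat)).map (fun bp => (liftB bp.1, bp.2))
      else none := rfl
  rw [hfun]
  beta_reduce
  have hrange : 0 ≤ liftAddr a ∧ liftAddr a < 2 ^ 64 :=
    ⟨Int.natCast_nonneg _, by rw [liftAddr]; exact_mod_cast UInt64.toNat_lt a⟩
  rw [if_pos hrange]
  have : UInt64.ofNat (liftAddr a).toNat = a := by
    rw [liftAddr, Int.toNat_natCast, ofNat_toNat64]
  rw [this]

/-- Refinement of byte reads from infinite to finite memory: if `σ^inf ≳ σ^fin`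
(i.e. `σ^inf` is the lifting of `σ^fin`), `p^inf = ↑p^fin`, and
`read_b p^inf σ^inf ∋ ok (σ^inf, b^inf)`, then there is a finite symbolic byte `b^fin`
with `b^inf = ↑b^fin` and `read_b p^fin σ^fin ∋ ok (σ^fin, b^fin)`. -/
theorem read_byte_spec_refinement {SBf SBi : Type}
    (liftB : SBf → SBi) (hinj : Function.Injective liftB)
    (σinf : Conf ℤ SBi) (σfin : Conf UInt64 SBf)
    (pinf : MPtr ℤ) (pfin : MPtr UInt64) (binf : SBi)
    (hσ : σinf = liftConf liftB σfin)
    (hp : pinf = liftPtr pfin)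
    (hread : ErrUbOom.ok (σinf, binf) ∈ readSpec pinf σinf) :
    ∃ bfin : SBf, binf = liftB bfin ∧ ErrUbOom.ok (σfin, bfin) ∈ readSpec pfin σfin := by
  subst hσ hp
  rcases hread with h | ⟨_, h⟩ | ⟨b, hb, heq⟩
  · exact absurd h (by simp)
  · exact absurd h (by simp)
  · injection heq with h'
    injection h' with _ h''
    have hb' : (liftConf liftB σfin).mem (liftAddr pfin.a) = some (b, pfin.pr) := hb
    rw [liftConf_mem] at hb'
    rcases h : σfin.mem pfin.a with _ | ⟨bf, pr⟩
    · rw [h] at hb'; exact absurd hb' (by simp)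
    · rw [h, Option.map_some] at hb'
      injection hb' with h2
      injection h2 with h3 h4
      exact ⟨bf, h''.trans h3.symm, Or.inr (Or.inr ⟨bf, by rw [readByteAt, h, ← h4], rfl⟩)⟩
end

section
/- Refinement of frame pushing from infinite to finite memory: if σ1^inf ≳ σ1^fin and pushf σ1^inf ∋ ok(σ2^inf, tt), then there exists σ2^fin such that σ2^inf ≳ σ2^fin and pushf σ1^fin ∋ ok(σ2^fin, tt). -/
/-- Specification of pushing a stack frame: an empty frame is pushed on the stack,
nothing else changes (`OOM` is always allowed). -/
def pushfSpec {Addr SByte : Type} : MemPropT Addr SByte Unit :=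
  fun σ1 =>
    { beh | beh = .OOM
          ∨ ∃ σ2 : Conf Addr SByte,
              σ2.mem = σ1.mem ∧ σ2.heap = σ1.heap ∧ σ2.used = σ1.used ∧
              σ2.stack = (∅ : Set (MPtr Addr)) :: σ1.stack ∧
              beh = .ok (σ2, ()) }
/-- Refinement of frame pushing from infinite to finite memory: if `σ1^inf ≳ σ1^fin`
and `pushf σ1^inf ∋ ok (σ2^inf, tt)`, then there exists `σ2^fin` such that
`σ2^inf ≳ σ2^fin` and `pushf σ1^fin ∋ ok (σ2^fin, tt)`. -/
theorem pushf_spec_refinement {SBf SBi : Type}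
    (liftB : SBf → SBi) (hinj : Function.Injective liftB)
    (σ1inf σ2inf : Conf ℤ SBi) (σ1fin : Conf UInt64 SBf)
    (hσ : σ1inf = liftConf liftB σ1fin)
    (hpush : ErrUbOom.ok (σ2inf, ()) ∈ pushfSpec σ1inf) :
    ∃ σ2fin : Conf UInt64 SBf,
      σ2inf = liftConf liftB σ2fin ∧
      ErrUbOom.ok (σ2fin, ()) ∈ pushfSpec σ1fin := by
  rcases hpush with h | ⟨σ2, hmem, hheap, hused, hstack, hok⟩
  · cases h
  · cases hok
    refine ⟨{ σ1fin with stack := (∅ : Set (MPtr UInt64)) :: σ1fin.stack }, ?_, ?_⟩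
    · subst hσ
      cases σ2inf with
      | mk mem heap stack used =>
        simp only [liftConf] at hmem hheap hused hstack ⊢
        simp_all [Set.image_empty]
    · exact Or.inr ⟨⟨σ1fin.mem, σ1fin.heap, (∅ : Set (MPtr UInt64)) :: σ1fin.stack, σ1fin.used⟩, rfl, rfl, rfl, rfl, rfl⟩
end
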